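/- With notation as above, for integer vectors x ∈ Z^k the automorphism Θ_F^x of D_F U equals conjugation by f^x = f_1^{x_1}···f_k^{x_k}, i.e. Θ_F^x(u) = f^x u f^{−x}. -/

import Mathlib

/-- Generalized binomial coefficient `C(x,i) = x(x-1)⋯(x-i+1)/i!`. -/
noncomputable def genBinom (x : ℂ) (i : ℕ) : ℂ :=
  (∏ j ∈ Finset.range i, (x - (j : ℂ))) / (i.factorial : ℂ)

/-- `ad g : u ↦ g*u - u*g` as a ℂ-linear endomorphism. -/
noncomputable def adE {L : Type*} [Ring L] [Algebra ℂ L] (g : L) : Module.End ℂ L :=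
  LinearMap.mulLeft ℂ g - LinearMap.mulRight ℂ g

/-- Iterated adjoint action `ad(f 1)^{m 1} ⋯ ad(f k)^{m k}` for a multi-index `m`. -/
noncomputable def multiAd {L : Type*} [Ring L] [Algebra ℂ L] {k : ℕ}
    (f : Fin k → Lˣ) (m : Fin k → ℕ) : Module.End ℂ L :=
  (List.ofFn fun i => (adE ((f i : L))) ^ (m i)).prod

/-- `f 1 ^ (-m 1) ⋯ f k ^ (-m k)`. -/
noncomputable def invPow {L : Type*} [Ring L] [Algebra ℂ L] {k : ℕ}
    (f : Fin k → Lˣ) (m : Fin k → ℕ) : L :=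
  (List.ofFn fun i => ((((f i)⁻¹ : Lˣ) : L)) ^ (m i)).prod

/-- The truncation (up to multi-indices `< N`) of the defining sum
`Θ_F^x(u) = Σ C(x_1,i_1)⋯C(x_k,i_k) ad(f_1)^{i_1}⋯ad(f_k)^{i_k}(u) f^{-i}`. -/
noncomputable def thetaSum {L : Type*} [Ring L] [Algebra ℂ L] {k : ℕ}
    (f : Fin k → Lˣ) (x : Fin k → ℂ) (N : ℕ) (u : L) : L :=
  ∑ m ∈ Fintype.piFinset (fun _ : Fin k => Finset.range N),
    (∏ i, genBinom (x i) (m i)) • (multiAd f m u * invPow f m)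

/-!
Conjugation by a unit `g` is `w ↦ w + ad(g)(w) g⁻¹`, and on the terms `a_m = ad(g)^m(v) g^{-m}` it
acts as the shift `a_m ↦ a_m + a_{m+1}`; the truncation at `N` is compatible with this because
`a_N = 0`. Pascal's rule `C(y+1, m) = C(y, m) + C(y, m-1)` therefore gives `Θ_g^{y+1} = g Θ_g^y g⁻¹`
for every complex `y`, and with `Θ_g^0 = id` this yields `Θ_g^x = (conjugation by g)^x` for all
integers `x`. Since the `f_i` commute, `ad(f_1)` commutes with right multiplication by the other
`f_i^{-m_i}`, so the multi-variable sum factors as `Θ_{f_1}^{x_1} ∘ Θ_{f_2,…,f_k}^{x'}`, and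
induction on `k` finishes the proof.
-/

open Finset ConjAct

lemma genBinom_eq_choose (x : ℂ) (i : ℕ) : genBinom x i = Ring.choose x i := by
  rw [Ring.choose_eq_smul, genBinom, smul_eq_mul, ← Polynomial.aeval_eq_smeval, div_eq_inv_mul,
    Polynomial.aeval_def, Polynomial.eval₂_eq_eval_map, descPochhammer_map,
    descPochhammer_eval_eq_prod_range]

lemma sum_range_choose_add_one_smul {R M : Type*} [Ring R] [BinomialRing R] [AddCommGroup M]
    [Module R M] (y : R) {N : ℕ} (a : ℕ → M) (ha : a N = 0) :
    ∑ m ∈ range N, Ring.choose (y + 1) m • a m =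
      ∑ m ∈ range N, Ring.choose y m • (a m + a (m + 1)) := by
  cases N with
  | zero => simp
  | succ n =>
    simp only [smul_add, sum_add_distrib]
    rw [sum_range_succ', sum_range_succ', sum_range_succ (fun m => Ring.choose y m • a (m + 1)),
      ha, smul_zero, add_zero]
    simp only [Ring.choose_succ_succ, Ring.choose_zero_right, add_smul, sum_add_distrib]
    abel

lemma Fin.sum_piFinset_const_succ {M : Type*} [AddCommMonoid M] {k : ℕ} (s : Finset ℕ)
    (g : (Fin (k + 1) → ℕ) → M) :
    ∑ m ∈ Fintype.piFinset (fun _ : Fin (k + 1) => s), g m =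
      ∑ m₀ ∈ s, ∑ m ∈ Fintype.piFinset (fun _ : Fin k => s), g (Fin.cons m₀ m) := by
  rw [← sum_product']
  apply Finset.sum_equiv (Fin.consEquiv fun _ => ℕ).symm
  · simp [Fin.consEquiv, Fin.forall_fin_succ, Fin.tail]
  · simp [Fin.consEquiv]

section OneVariable

variable {L : Type*} [Ring L] [Algebra ℂ L]

lemma adE_apply (g u : L) : adE g u = g * u - u * g := rfl

lemma adE_mul_of_commute {g d : L} (hd : Commute g d) (v : L) :
    adE g (v * d) = adE g v * d := by
  simp only [adE_apply, sub_mul, mul_assoc, hd.eq]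

lemma adE_pow_mul_of_commute {g d : L} (hd : Commute g d) (n : ℕ) (v : L) :
    (adE g ^ n) (v * d) = (adE g ^ n) v * d := by
  induction n with
  | zero => rfl
  | succ n ih => rw [pow_succ', Module.End.mul_apply, ih, adE_mul_of_commute hd]; rfl

lemma adE_pow_mul_left_of_commute {g c : L} (hc : Commute g c) (n : ℕ) (v : L) :
    (adE g ^ n) (c * v) = c * (adE g ^ n) v := by
  induction n with
  | zero => rfl
  | succ n ih =>
    simp only [pow_succ', Module.End.mul_apply, ih, adE_apply, mul_sub, ← mul_assoc, hc.eq]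

lemma toConjAct_smul_eq_add_adE (g : Lˣ) (w : L) :
    toConjAct g • w = w + adE (g : L) w * ↑g⁻¹ := by
  rw [units_smul_def, ofConjAct_toConjAct, adE_apply, sub_mul, mul_assoc w, Units.mul_inv,
    mul_one, add_sub_cancel]

lemma toConjAct_smul_adE_pow_mul_inv_pow (g : Lˣ) (v : L) (m : ℕ) :
    toConjAct g • ((adE (g : L) ^ m) v * ↑g⁻¹ ^ m) =
      (adE (g : L) ^ m) v * ↑g⁻¹ ^ m + (adE (g : L) ^ (m + 1)) v * ↑g⁻¹ ^ (m + 1) := by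
  have hg : Commute (g : L) (↑g⁻¹ ^ m) := (Commute.refl (g : L)).units_inv_right.pow_right m
  rw [toConjAct_smul_eq_add_adE, adE_mul_of_commute hg, pow_succ', pow_succ, mul_assoc]
  rfl

/-- The one-variable sum `Θ_g^y(v)`, truncated at `N`. -/
noncomputable def thetaOne (g : Lˣ) (y : ℂ) (N : ℕ) (v : L) : L :=
  ∑ m ∈ range N, genBinom y m • ((adE (g : L) ^ m) v * ↑g⁻¹ ^ m)

lemma thetaOne_zero (g : Lˣ) {N : ℕ} {v : L} (hv : (adE (g : L) ^ N) v = 0) :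
    thetaOne g 0 N v = v := by
  cases N with
  | zero => simpa [thetaOne] using hv.symm
  | succ n => simp [thetaOne, sum_range_succ', genBinom_eq_choose]

lemma thetaOne_add_one (g : Lˣ) (y : ℂ) {N : ℕ} {v : L} (hv : (adE (g : L) ^ N) v = 0) :
    thetaOne g (y + 1) N v = toConjAct g • thetaOne g y N v := by
  simp only [thetaOne, genBinom_eq_choose, smul_sum, smul_comm (toConjAct g),
    toConjAct_smul_adE_pow_mul_inv_pow]
  exact sum_range_choose_add_one_smul y _ (by rw [hv, zero_mul])

lemma thetaOne_intCast (g : Lˣ) {N : ℕ} {v : L} (hv : (adE (g : L) ^ N) v = 0) (x : ℤ) :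
    thetaOne g x N v = toConjAct (g ^ x) • v := by
  rw [map_zpow]
  induction x using Int.induction_on with
  | zero => simpa using thetaOne_zero g hv
  | succ n ih =>
    rw [Int.cast_add, Int.cast_one, thetaOne_add_one g _ hv, ih, smul_smul, ← zpow_one_add,
      add_comm]
  | pred n ih =>
    have h := thetaOne_add_one g ((-(n : ℤ) - 1 : ℤ) : ℂ) hv
    rw [show ((-(n : ℤ) - 1 : ℤ) : ℂ) + 1 = ((-(n : ℤ) : ℤ) : ℂ) by push_cast; ring, ih,
      ← inv_smul_eq_iff, smul_smul, ← zpow_neg_one, ← zpow_add] at h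
    rw [← h, neg_add_eq_sub]

end OneVariable

section MultiVariable

variable {L : Type*} [Ring L] [Algebra ℂ L] {k : ℕ}

lemma multiAd_cons (f : Fin (k + 1) → Lˣ) (m₀ : ℕ) (m : Fin k → ℕ) :
    multiAd f (Fin.cons m₀ m) = adE (f 0 : L) ^ m₀ * multiAd (Fin.tail f) m := by
  simp [multiAd, List.ofFn_succ, Fin.tail]

lemma invPow_cons (f : Fin (k + 1) → Lˣ) (m₀ : ℕ) (m : Fin k → ℕ) :
    invPow f (Fin.cons m₀ m) = ↑(f 0)⁻¹ ^ m₀ * invPow (Fin.tail f) m := by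
  simp [invPow, List.ofFn_succ, Fin.tail]

lemma commute_invPow {a : L} {f : Fin k → Lˣ} (ha : ∀ i, Commute a (f i)) (m : Fin k → ℕ) :
    Commute a (invPow f m) :=
  Commute.list_prod_right _ _ fun y hy => by
    obtain ⟨i, rfl⟩ := List.mem_ofFn.mp hy
    exact (ha i).units_inv_right.pow_right _

lemma thetaSum_succ (f : Fin (k + 1) → Lˣ) (hf : ∀ i : Fin k, Commute (f 0 : L) (f i.succ))
    (x : Fin (k + 1) → ℂ) (N : ℕ) (u : L) :
    thetaSum f x N u = thetaOne (f 0) (x 0) N (thetaSum (Fin.tail f) (Fin.tail x) N u) := by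
  have hB : ∀ m, Commute (f 0 : L) (invPow (Fin.tail f) m) := commute_invPow hf
  simp only [thetaSum, thetaOne, Fin.sum_piFinset_const_succ, map_sum, sum_mul, smul_sum]
  refine sum_congr rfl fun m₀ _ => sum_congr rfl fun m _ => ?_
  rw [Fin.prod_univ_succ, multiAd_cons, invPow_cons, Module.End.mul_apply, map_smul,
    smul_mul_assoc, smul_smul, ((hB m).units_inv_left.pow_left m₀).eq, ← mul_assoc,
    ← adE_pow_mul_of_commute (hB m)]
  rfl

theorem thetaSum_intCast (f : Fin k → Lˣ) (hcomm : ∀ i j, Commute (f i : L) (f j))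
    (x : Fin k → ℤ) (u : L) (N : ℕ) (hN : ∀ i, (adE (f i : L) ^ N) u = 0) :
    thetaSum f (fun i => (x i : ℂ)) N u = toConjAct (List.ofFn fun i => f i ^ x i).prod • u := by
  induction k with
  | zero => simp [thetaSum, multiAd, invPow]
  | succ k ih =>
    set F := (List.ofFn fun i => Fin.tail f i ^ Fin.tail x i).prod
    have hF : Commute (f 0 : L) F := Commute.units_val_iff.mpr <|
      Commute.list_prod_right _ _ fun y hy => by
        obtain ⟨i, rfl⟩ := List.mem_ofFn.mp hy
        exact (Commute.units_val_iff.mp (hcomm 0 i.succ)).zpow_right _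
    have hv : (adE (f 0 : L) ^ N) (toConjAct F • u) = 0 := by
      rw [units_smul_def, ofConjAct_toConjAct, adE_pow_mul_of_commute hF.units_inv_right,
        adE_pow_mul_left_of_commute hF, hN 0, mul_zero, zero_mul]
    rw [thetaSum_succ f (fun i => hcomm 0 i.succ),
      show (Fin.tail fun i => (x i : ℂ)) = fun i => (Fin.tail x i : ℂ) from rfl,
      ih (Fin.tail f) (fun i j => hcomm _ _) (Fin.tail x) (fun i => hN _),
      thetaOne_intCast _ hv, List.ofFn_succ, List.prod_cons, map_mul, mul_smul]
    rfl

end MultiVariable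

theorem theta_int_eq_conjugation_general {L : Type*} [Ring L] [Algebra ℂ L] (k : ℕ)
    (f : Fin k → Lˣ)
    (hcomm : ∀ i j, (f i : L) * (f j : L) = (f j : L) * (f i : L))
    (x : Fin k → ℤ) (u : L) (N : ℕ)
    (hN : ∀ i, ((adE ((f i : L))) ^ N) u = 0) :
    thetaSum f (fun i => (x i : ℂ)) N u =
      (((List.ofFn fun i => (f i) ^ (x i)).prod : Lˣ) : L) * u *
        ((((List.ofFn fun i => (f i) ^ (x i)).prod : Lˣ)⁻¹ : Lˣ) : L) := by
  rw [thetaSum_intCast f hcomm x u N hN, units_smul_def, ofConjAct_toConjAct]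

/-- for integer exponent vectors `x ∈ ℤ^k`, the generalized-binomial
formula for `Θ_F^x` (computed by its truncation at any `N` killing `u`) equals
conjugation by `f^x = f_1^{x_1} ⋯ f_k^{x_k}`. -/
theorem theta_int_eq_conjugation {L : Type*} [Ring L] [Algebra ℂ L] (k : ℕ)
    (f : Fin k → Lˣ)
    (hcomm : ∀ i j, (f i : L) * (f j : L) = (f j : L) * (f i : L))
    (hnil : ∀ i (u : L), ∃ N : ℕ, ((adE ((f i : L))) ^ N) u = 0)
    (x : Fin k → ℤ) (u : L) (N : ℕ)
    (hN : ∀ i, ((adE ((f i : L))) ^ N) u = 0) :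
    thetaSum f (fun i => (x i : ℂ)) N u =
      (((List.ofFn fun i => (f i) ^ (x i)).prod : Lˣ) : L) * u *
        ((((List.ofFn fun i => (f i) ^ (x i)).prod : Lˣ)⁻¹ : Lˣ) : L) :=
  theta_int_eq_conjugation_general k f hcomm x u N hN
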